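/- X_α is exactly the space of strong τ_{F_α}-continuity inside F_α: for x ∈ F_α one has x ∈ X_α if and only if lim_{t→0+} p_{F_α}(T(t)x − x) = 0 for every p ∈ 𝒫; that is, X_α = {x ∈ F_α : the orbit t ↦ T(t)x is τ_{F_α}-continuous at t = 0}. -/

import Mathlib

/-!
Write `z_t = T(t)x − x`. Since the semigroup commutes, `T(u)z_t − z_t = T(t)z_u − z_u`.
If `x ∈ X_α`, the vectors `u^{−α} z_u` are norm-bounded and `τ`-null as `u → 0⁺`, so local
bi-equicontinuity makes `u^{−α} p(T(t)z_u − z_u)` small for all small `u`, uniformly in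
`t ∈ [0, 1]`; for `u ≥ δ` the quotient is at most `(M + 1)‖z_t‖ / δ^α`, which tends to `0`.
Conversely, `z_{2t} = 2z_t + (T(t)z_t − z_t)` gives, for `b(t) = t^{−α} p(z_t)`,
`b(t) ≤ 2^{α−1} b(2t) + p_{F_α}(z_t) / 2`; since `2^{α−1} < 1` and `b` is bounded on `F_α`,
iterating along dyadic scales forces `b(t) → 0`.
-/

open scoped Topology

/-- The Favard norm `‖z‖_{F_α} = sup_{t>0} t^{−α}‖T(t)z − z‖` (as a supremum in `ℝ`). -/
noncomputable def favNorm {X : Type*} [NormedAddCommGroup X] [NormedSpace ℝ X]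
    (T : ℝ → X →L[ℝ] X) (α : ℝ) (z : X) : ℝ :=
  sSup ((fun t : ℝ => ‖T t z - z‖ / t ^ α) '' Set.Ioi 0)

/-- Membership in the Favard space `F_α`. -/
def memFav {X : Type*} [NormedAddCommGroup X] [NormedSpace ℝ X]
    (T : ℝ → X →L[ℝ] X) (α : ℝ) (z : X) : Prop :=
  BddAbove ((fun t : ℝ => ‖T t z - z‖ / t ^ α) '' Set.Ioi 0)

/-- The seminorm `p_{F_α}(z) = sup_{t>0} t^{−α} p(T(t)z − z)`. -/
noncomputable def pFav {X : Type*} [NormedAddCommGroup X] [NormedSpace ℝ X]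
    (T : ℝ → X →L[ℝ] X) (α : ℝ) (p : Seminorm ℝ X) (z : X) : ℝ :=
  sSup ((fun t : ℝ => p (T t z - z) / t ^ α) '' Set.Ioi 0)

/-- Membership in the space `X_α ⊆ F_α`. -/
def memX {X : Type*} [NormedAddCommGroup X] [NormedSpace ℝ X]
    (P : Set (Seminorm ℝ X)) (T : ℝ → X →L[ℝ] X) (α : ℝ) (z : X) : Prop :=
  memFav T α z ∧
    ∀ p ∈ P, Filter.Tendsto (fun t : ℝ => p (T t z - z) / t ^ α)
      (nhdsWithin 0 (Set.Ioi 0)) (nhds 0)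

open Filter Set

def IsLocallyBiEquicontinuous {X : Type*} [NormedAddCommGroup X] [NormedSpace ℝ X]
    (P : Set (Seminorm ℝ X)) (T : ℝ → X →L[ℝ] X) : Prop :=
  ∀ (u : ℕ → X) (C : ℝ), (∀ n, ‖u n‖ ≤ C) →
    (∀ p ∈ P, Tendsto (fun n => p (u n)) atTop (𝓝 0)) →
    ∀ t₀ > (0:ℝ), ∀ p ∈ P, ∀ ε > (0:ℝ), ∃ N : ℕ, ∀ n ≥ N, ∀ s ∈ Icc (0:ℝ) t₀,
      p (T s (u n)) < ε

theorem tendsto_nhdsGT_zero_of_le_mul_comp_two_add {b r : ℝ → ℝ} {θ C : ℝ}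
    (hθ0 : 0 ≤ θ) (hθ1 : θ < 1) (hb0 : ∀ t > 0, 0 ≤ b t) (hbC : ∀ t > 0, b t ≤ C)
    (hr : Tendsto r (𝓝[>] 0) (𝓝 0)) (hrec : ∀ t > 0, b t ≤ θ * b (2 * t) + r t) :
    Tendsto b (𝓝[>] 0) (𝓝 0) := by
  rw [Metric.tendsto_nhdsWithin_nhds] at hr ⊢
  intro ε hε
  obtain ⟨δ, hδ, hrδ⟩ := hr (ε / 2 * (1 - θ)) (by nlinarith)
  -- each unrolling adds `(1 - θ) ε / 2`; the factor `θ` keeps the total error below `ε / 2`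
  have hiter : ∀ n : ℕ, ∀ t > 0, t < δ / 2 ^ n → b t ≤ θ ^ n * C + ε / 2 := by
    intro n
    induction n with
    | zero => intro t ht _; linarith [hbC t ht]
    | succ n ih =>
      intro t ht htδ
      have h2t : 2 * t < δ / 2 ^ n := by
        rw [pow_succ] at htδ
        rw [lt_div_iff₀ (by positivity)] at htδ ⊢
        linarith
      have htδ' : t < δ := htδ.trans_le (div_le_self hδ.le (one_le_pow₀ one_le_two))
      have hrt : r t < ε / 2 * (1 - θ) := by
        have := hrδ ht (by rw [Real.dist_0_eq_abs, abs_of_pos ht]; exact htδ')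
        exact (abs_lt.mp (by rwa [Real.dist_0_eq_abs] at this)).2
      calc b t ≤ θ * b (2 * t) + r t := hrec t ht
        _ ≤ θ * (θ ^ n * C + ε / 2) + ε / 2 * (1 - θ) := by
          gcongr
          exact ih (2 * t) (by positivity) h2t
        _ = θ ^ (n + 1) * C + ε / 2 := by ring
  obtain ⟨n, hn⟩ : ∃ n : ℕ, θ ^ n * C < ε / 2 := by
    have : Tendsto (fun n : ℕ => θ ^ n * C) atTop (𝓝 0) := by
      simpa using (tendsto_pow_atTop_nhds_zero_of_lt_one hθ0 hθ1).mul_const C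
    exact (this.eventually (gt_mem_nhds (half_pos hε))).exists
  refine ⟨δ / 2 ^ n, by positivity, fun t ht htδ => ?_⟩
  have ht : 0 < t := ht
  rw [Real.dist_0_eq_abs, abs_of_pos ht] at htδ
  rw [Real.dist_0_eq_abs, abs_of_nonneg (hb0 t ht)]
  linarith [hiter n t ht htδ]

section

variable {X : Type*} [NormedAddCommGroup X] [NormedSpace ℝ X]
  {P : Set (Seminorm ℝ X)} {T : ℝ → X →L[ℝ] X} {M α : ℝ}

theorem le_norm_of_norm_eq_sSup
    (hnorm : ∀ x : X, ‖x‖ = sSup {r : ℝ | ∃ p ∈ P, r = p x}) {p : Seminorm ℝ X} (hp : p ∈ P)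
    (y : X) : p y ≤ ‖y‖ := by
  rcases eq_or_ne y 0 with rfl | hy
  · simp
  have hbdd : BddAbove {r : ℝ | ∃ q ∈ P, r = q y} := by
    by_contra hunb
    exact hy (norm_eq_zero.mp ((hnorm y).trans (Real.sSup_of_not_bddAbove hunb)))
  exact (le_csSup hbdd ⟨p, hp, rfl⟩).trans_eq (hnorm y).symm

theorem norm_apply_le_of_growth {ω : ℝ} (hM : 0 ≤ M) (hω : ω ≤ 0)
    (hgrowth : ∀ t : ℝ, 0 ≤ t → ‖T t‖ ≤ M * Real.exp (ω * t))
    {t : ℝ} (ht : 0 ≤ t) (y : X) : ‖T t y‖ ≤ M * ‖y‖ := by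
  have hexp : Real.exp (ω * t) ≤ 1 :=
    Real.exp_le_one_iff.mpr (mul_nonpos_of_nonpos_of_nonneg hω ht)
  exact (T t).le_of_opNorm_le ((hgrowth t ht).trans (mul_le_of_le_one_right hM hexp)) y

theorem semigroup_apply_comm
    (hTsg : ∀ s t : ℝ, 0 ≤ s → 0 ≤ t → T (t + s) = (T t).comp (T s))
    {s t : ℝ} (hs : 0 ≤ s) (ht : 0 ≤ t) (x : X) : T s (T t x) = T t (T s x) := by
  have := congrArg (· x) (hTsg t s ht hs)
  rw [add_comm, hTsg s t hs ht] at this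
  exact this.symm

theorem semigroup_apply_sub_sub_comm
    (hTsg : ∀ s t : ℝ, 0 ≤ s → 0 ≤ t → T (t + s) = (T t).comp (T s))
    {s t : ℝ} (hs : 0 ≤ s) (ht : 0 ≤ t) (x : X) :
    T s (T t x - x) - (T t x - x) = T t (T s x - x) - (T s x - x) := by
  simp only [map_sub, semigroup_apply_comm hTsg hs ht]
  abel

theorem seminorm_apply_sub_le {p : Seminorm ℝ X} (hp : ∀ y, p y ≤ ‖y‖) {S : X →L[ℝ] X}
    (hS : ∀ y, ‖S y‖ ≤ M * ‖y‖) (y : X) : p (S y - y) ≤ (M + 1) * ‖y‖ :=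
  calc p (S y - y) ≤ ‖S y - y‖ := hp _
    _ ≤ ‖S y‖ + ‖y‖ := norm_sub_le _ _
    _ ≤ (M + 1) * ‖y‖ := by linarith [hS y]

theorem norm_sub_le_favNorm_mul {x : X} (hx : memFav T α x)
    {t : ℝ} (ht : 0 < t) : ‖T t x - x‖ ≤ favNorm T α x * t ^ α :=
  (div_le_iff₀ (Real.rpow_pos_of_pos ht α)).mp (le_csSup hx ⟨t, ht, rfl⟩)

theorem tendsto_norm_sub_of_memFav (hα : 0 < α) {x : X} (hx : memFav T α x) :
    Tendsto (fun t => ‖T t x - x‖) (𝓝[>] 0) (𝓝 0) := by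
  have hpow : Tendsto (fun t : ℝ => favNorm T α x * t ^ α) (𝓝[>] 0) (𝓝 0) := by
    simpa [Real.zero_rpow hα.ne'] using
      ((Real.continuousAt_rpow_const 0 α (Or.inr hα.le)).tendsto.mono_left
        nhdsWithin_le_nhds).const_mul (favNorm T α x)
  exact squeeze_zero' (Eventually.of_forall fun _ => norm_nonneg _)
    (eventually_nhdsWithin_of_forall fun t ht => norm_sub_le_favNorm_mul hx ht) hpow

theorem pFav_le {p : Seminorm ℝ X} {z : X} {c : ℝ}
    (h : ∀ u > 0, p (T u z - z) / u ^ α ≤ c) : pFav T α p z ≤ c :=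
  csSup_le (nonempty_Ioi.image _) (by rintro _ ⟨u, hu, rfl⟩; exact h u hu)

theorem pFav_nonneg (p : Seminorm ℝ X) (z : X) : 0 ≤ pFav T α p z :=
  Real.sSup_nonneg (by
    rintro _ ⟨u, hu, rfl⟩
    exact div_nonneg (apply_nonneg _ _) (Real.rpow_nonneg (le_of_lt hu) α))

theorem IsLocallyBiEquicontinuous.eventually_forall_Icc_lt (hT : IsLocallyBiEquicontinuous P T)
    {ι : Type*} {l : Filter ι} [l.IsCountablyGenerated] {v : ι → X} {C : ℝ}
    (hvC : ∀ᶠ i in l, ‖v i‖ ≤ C) (hv : ∀ q ∈ P, Tendsto (fun i => q (v i)) l (𝓝 0))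
    {t₀ : ℝ} (ht₀ : 0 < t₀) {p : Seminorm ℝ X} (hp : p ∈ P) {ε : ℝ} (hε : 0 < ε) :
    ∀ᶠ i in l, ∀ s ∈ Icc 0 t₀, p (T s (v i)) < ε := by
  by_contra hnot
  obtain ⟨ns, hns, hbad⟩ :=
    exists_seq_forall_of_frequently ((not_eventually.mp hnot).and_eventually hvC)
  obtain ⟨N, hN⟩ := hT (v ∘ ns) C (fun n => (hbad n).2) (fun q hq => (hv q hq).comp hns)
    t₀ ht₀ p hp ε hε
  exact (hbad N).1 (hN N le_rfl)

theorem bddAbove_orbit_diff_quotient (hM : 0 ≤ M) {p : Seminorm ℝ X} (hp : ∀ y, p y ≤ ‖y‖)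
    (hbdd : ∀ t ≥ 0, ∀ y, ‖T t y‖ ≤ M * ‖y‖)
    (hTsg : ∀ s t : ℝ, 0 ≤ s → 0 ≤ t → T (t + s) = (T t).comp (T s))
    {x : X} (hx : memFav T α x) {t : ℝ} (ht : 0 ≤ t) :
    BddAbove ((fun u => p (T u (T t x - x) - (T t x - x)) / u ^ α) '' Ioi 0) := by
  refine ⟨(M + 1) * favNorm T α x, ?_⟩
  rintro _ ⟨u, hu, rfl⟩
  have hu : 0 < u := hu
  rw [div_le_iff₀ (Real.rpow_pos_of_pos hu α), semigroup_apply_sub_sub_comm hTsg hu.le ht,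
    mul_assoc]
  exact (seminorm_apply_sub_le hp (hbdd t ht) _).trans
    (mul_le_mul_of_nonneg_left (norm_sub_le_favNorm_mul hx hu) (by linarith))

theorem div_rpow_le_two_rpow_div_two_mul_add
    (hTsg : ∀ s t : ℝ, 0 ≤ s → 0 ≤ t → T (t + s) = (T t).comp (T s))
    (p : Seminorm ℝ X) (x : X) {t : ℝ} (ht : 0 < t) :
    p (T t x - x) / t ^ α ≤ 2 ^ α / 2 * (p (T (2 * t) x - x) / (2 * t) ^ α)
      + p (T t (T t x - x) - (T t x - x)) / t ^ α / 2 := by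
  have hpow : 0 < t ^ α := Real.rpow_pos_of_pos ht α
  have hsplit : 2 * p (T t x - x) ≤ p (T (2 * t) x - x) + p (T t (T t x - x) - (T t x - x)) := by
    have hid : (T (2 * t) x - x) - (T t (T t x - x) - (T t x - x)) = (2 : ℝ) • (T t x - x) := by
      rw [two_mul, hTsg t t ht.le ht.le, two_smul, ContinuousLinearMap.comp_apply, map_sub]
      abel
    have := map_sub_le_add p (T (2 * t) x - x) (T t (T t x - x) - (T t x - x))
    rwa [hid, map_smul_eq_mul, Real.norm_two] at this
  rw [Real.mul_rpow zero_le_two ht.le]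
  have h2 : (0 : ℝ) < 2 ^ α := Real.rpow_pos_of_pos two_pos α
  rw [div_le_iff₀ hpow]
  field_simp
  linarith

theorem tendsto_pFav_of_memX (hM : 0 ≤ M) (hple : ∀ p ∈ P, ∀ y, p y ≤ ‖y‖)
    (hbdd : ∀ t ≥ 0, ∀ y, ‖T t y‖ ≤ M * ‖y‖)
    (hTsg : ∀ s t : ℝ, 0 ≤ s → 0 ≤ t → T (t + s) = (T t).comp (T s))
    (hT : IsLocallyBiEquicontinuous P T) (hα : 0 < α) {x : X} (hx : memX P T α x)
    {p : Seminorm ℝ X} (hp : p ∈ P) :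
    Tendsto (fun t => pFav T α p (T t x - x)) (𝓝[>] 0) (𝓝 0) := by
  obtain ⟨hxF, hxX⟩ := hx
  have hscale : ∀ q : Seminorm ℝ X, ∀ u > 0, ∀ y, q ((u ^ α)⁻¹ • y) = q y / u ^ α := by
    intro q u hu y
    rw [map_smul_eq_mul, norm_inv, Real.norm_of_nonneg (Real.rpow_pos_of_pos hu α).le,
      inv_mul_eq_div]
  set v : ℝ → X := fun u => (u ^ α)⁻¹ • (T u x - x)
  have hvC : ∀ᶠ u in 𝓝[>] 0, ‖v u‖ ≤ favNorm T α x :=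
    eventually_nhdsWithin_of_forall fun u hu => by
      have := hscale (normSeminorm ℝ X) u hu (T u x - x)
      rw [coe_normSeminorm] at this
      exact this.trans_le (le_csSup hxF ⟨u, hu, rfl⟩)
  have hv0 : ∀ q ∈ P, Tendsto (fun u => q (v u)) (𝓝[>] 0) (𝓝 0) := fun q hq =>
    (hxX q hq).congr' (eventually_nhdsWithin_of_forall fun u hu => (hscale q u hu _).symm)
  rw [Metric.tendsto_nhds]
  intro ε hε
  obtain ⟨δ, hδ, hsmall⟩ : ∃ δ > 0, ∀ u ∈ Ioo 0 δ,
      (∀ s ∈ Icc 0 1, p (T s (v u)) < ε / 4) ∧ p (v u) < ε / 4 :=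
    (nhdsGT_basis 0).eventually_iff.mp
      ((hT.eventually_forall_Icc_lt hvC hv0 one_pos hp (by positivity)).and
        ((hv0 p hp).eventually (gt_mem_nhds (by positivity))))
  have hδα : 0 < δ ^ α := Real.rpow_pos_of_pos hδ α
  have hlarge : ∀ᶠ t in 𝓝[>] 0, (M + 1) * ‖T t x - x‖ < ε / 2 * δ ^ α :=
    ((tendsto_norm_sub_of_memFav hα hxF).const_mul (M + 1)).eventually
      (gt_mem_nhds (by rw [mul_zero]; positivity))
  filter_upwards [hlarge, Ioo_mem_nhdsGT one_pos, self_mem_nhdsWithin] with t htlarge ht1 ht0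
  rw [Real.dist_0_eq_abs, abs_of_nonneg (pFav_nonneg _ _)]
  refine (pFav_le fun u hu => ?_).trans_lt (half_lt_self hε)
  rcases lt_or_ge u δ with huδ | huδ
  · have hsmall_u := hsmall u ⟨hu, huδ⟩
    have hTv : T t (v u) - v u = (u ^ α)⁻¹ • (T t (T u x - x) - (T u x - x)) := by
      rw [ContinuousLinearMap.map_smul, smul_sub]
    calc p (T u (T t x - x) - (T t x - x)) / u ^ α
        = p (T t (v u) - v u) := by
          rw [semigroup_apply_sub_sub_comm hTsg hu.le (le_of_lt ht0), hTv, hscale p u hu]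
      _ ≤ p (T t (v u)) + p (v u) := map_sub_le_add _ _ _
      _ ≤ ε / 2 := by linarith [hsmall_u.1 t ⟨le_of_lt ht0, ht1.2.le⟩, hsmall_u.2]
  · calc p (T u (T t x - x) - (T t x - x)) / u ^ α
        ≤ (M + 1) * ‖T t x - x‖ / δ ^ α :=
          div_le_div₀ (by positivity) (seminorm_apply_sub_le (hple p hp) (hbdd u hu.le) _) hδα
            (Real.rpow_le_rpow hδ.le huδ hα.le)
      _ ≤ ε / 2 := by rw [div_le_iff₀ hδα]; exact htlarge.le

theorem memX_of_tendsto_pFav (hM : 0 ≤ M) (hple : ∀ p ∈ P, ∀ y, p y ≤ ‖y‖)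
    (hbdd : ∀ t ≥ 0, ∀ y, ‖T t y‖ ≤ M * ‖y‖)
    (hTsg : ∀ s t : ℝ, 0 ≤ s → 0 ≤ t → T (t + s) = (T t).comp (T s))
    (hα : α < 1) {x : X} (hx : memFav T α x)
    (h : ∀ p ∈ P, Tendsto (fun t => pFav T α p (T t x - x)) (𝓝[>] 0) (𝓝 0)) :
    memX P T α x := by
  refine ⟨hx, fun p hp => ?_⟩
  have hθ : (2 : ℝ) ^ α / 2 < 1 := by
    rw [div_lt_one two_pos]
    simpa using Real.rpow_lt_rpow_of_exponent_lt one_lt_two hα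
  refine tendsto_nhdsGT_zero_of_le_mul_comp_two_add (b := fun t => p (T t x - x) / t ^ α)
    (r := fun t => pFav T α p (T t x - x) / 2) (C := favNorm T α x) (by positivity) hθ
    (fun t ht => div_nonneg (apply_nonneg _ _) (Real.rpow_nonneg ht.le _))
    (fun t ht => ?_) (by simpa using (h p hp).div_const 2) (fun t ht => ?_)
  · exact (div_le_div_of_nonneg_right (hple p hp _) (Real.rpow_nonneg ht.le _)).trans
      (le_csSup hx ⟨t, ht, rfl⟩)
  · refine (div_rpow_le_two_rpow_div_two_mul_add hTsg p x ht).trans ?_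
    gcongr
    exact le_csSup (bddAbove_orbit_diff_quotient hM (hple p hp) hbdd hTsg hx ht.le) ⟨t, ht, rfl⟩

end

theorem statement14_general
    {X : Type*} [NormedAddCommGroup X] [NormedSpace ℝ X]
    (P : Set (Seminorm ℝ X))
    (hnorm : ∀ x : X, ‖x‖ = sSup {r : ℝ | ∃ p ∈ P, r = p x})
    (T : ℝ → X →L[ℝ] X)
    (hTsg : ∀ s t : ℝ, 0 ≤ s → 0 ≤ t → T (t + s) = (T t).comp (T s))
    (M ω : ℝ) (hM : 1 ≤ M) (hω : ω < 0)
    (hgrowth : ∀ t : ℝ, 0 ≤ t → ‖T t‖ ≤ M * Real.exp (ω * t))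
    (hbieq : ∀ (u : ℕ → X) (C : ℝ), (∀ n, ‖u n‖ ≤ C) →
      (∀ p ∈ P, Filter.Tendsto (fun n => p (u n)) Filter.atTop (𝓝 0)) →
      ∀ t₀ > (0:ℝ), ∀ p ∈ P, ∀ ε > (0:ℝ), ∃ N : ℕ, ∀ n ≥ N, ∀ s ∈ Set.Icc (0:ℝ) t₀,
        p (T s (u n)) < ε)
    (α : ℝ) (hα : α ∈ Set.Ioo (0:ℝ) 1)
    (x : X) (hx : memFav T α x) :
    memX P T α x ↔
      ∀ p ∈ P, Filter.Tendsto (fun t : ℝ => pFav T α p (T t x - x))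
        (𝓝[>] (0:ℝ)) (𝓝 0) := by
  have hM0 : 0 ≤ M := zero_le_one.trans hM
  have hple : ∀ p ∈ P, ∀ y, p y ≤ ‖y‖ := fun p hp => le_norm_of_norm_eq_sSup hnorm hp
  have hbdd : ∀ t ≥ 0, ∀ y, ‖T t y‖ ≤ M * ‖y‖ := fun t ht =>
    norm_apply_le_of_growth hM0 hω.le hgrowth ht
  exact ⟨fun hX p hp => tendsto_pFav_of_memX hM0 hple hbdd hTsg hbieq hα.1 hX hp,
    memX_of_tendsto_pFav hM0 hple hbdd hTsg hα.2 hx⟩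

/-- `X_α` is exactly the space of strong `τ_{F_α}`-continuity inside `F_α`:
for `x ∈ F_α`, `x ∈ X_α` iff `p_{F_α}(T(t)x − x) → 0` as `t → 0+` for every `p ∈ 𝒫`. -/
theorem statement14
    {X : Type*} [NormedAddCommGroup X] [NormedSpace ℝ X] [CompleteSpace X]
    (P : Set (Seminorm ℝ X))
    (hnorm : ∀ x : X, ‖x‖ = sSup {r : ℝ | ∃ p ∈ P, r = p x})
    (hcomplete : ∀ (u : ℕ → X) (C : ℝ), (∀ n, ‖u n‖ ≤ C) →
      (∀ p ∈ P, ∀ ε > (0:ℝ), ∃ N : ℕ, ∀ m ≥ N, ∀ n ≥ N, p (u m - u n) < ε) →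
      ∃ x : X, ∀ p ∈ P, Filter.Tendsto (fun n => p (u n - x)) Filter.atTop (𝓝 0))
    (T : ℝ → X →L[ℝ] X) (hT0 : T 0 = 1)
    (hTsg : ∀ s t : ℝ, 0 ≤ s → 0 ≤ t → T (t + s) = (T t).comp (T s))
    (M ω : ℝ) (hM : 1 ≤ M) (hω : ω < 0)
    (hgrowth : ∀ t : ℝ, 0 ≤ t → ‖T t‖ ≤ M * Real.exp (ω * t))
    (horbit : ∀ x : X, ∀ p ∈ P, ∀ t₀ : ℝ, 0 ≤ t₀ →
      Filter.Tendsto (fun t : ℝ => p (T t x - T t₀ x)) (𝓝[Set.Ici 0] t₀) (𝓝 0))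
    (hbieq : ∀ (u : ℕ → X) (C : ℝ), (∀ n, ‖u n‖ ≤ C) →
      (∀ p ∈ P, Filter.Tendsto (fun n => p (u n)) Filter.atTop (𝓝 0)) →
      ∀ t₀ > (0:ℝ), ∀ p ∈ P, ∀ ε > (0:ℝ), ∃ N : ℕ, ∀ n ≥ N, ∀ s ∈ Set.Icc (0:ℝ) t₀,
        p (T s (u n)) < ε)
    (α : ℝ) (hα : α ∈ Set.Ioo (0:ℝ) 1)
    (x : X) (hx : memFav T α x) :
    memX P T α x ↔
      ∀ p ∈ P, Filter.Tendsto (fun t : ℝ => pFav T α p (T t x - x))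
        (𝓝[>] (0:ℝ)) (𝓝 0) :=
  statement14_general P hnorm T hTsg M ω hM hω hgrowth hbieq α hα x hx
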